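/- arXiv:1912.08418 — 5 statements merged into one kernel-verified Lean document; each statement's English description precedes it below -/
import Mathlib

section
/- If r : A ⇸ B and s : B ⇸ A are weakening relations between posets with r ⊣ s (i.e. Id_A ⊆ s·r and r·s ⊆ Id_B), then there exists a unique monotone function f : A → B such that r(a,b) ↔ f(a) ≤ b and s(b,a) ↔ b ≤ f(a). -/
theorem adjoint_weakening_relations_are_maps {A B : Type*} [PartialOrder A] [PartialOrder B]
    (r : A → B → Prop) (s : B → A → Prop)
    (hr : ∀ a' a b b', a' ≤ a → r a b → b ≤ b' → r a' b')
    (hs : ∀ b' b a a', b' ≤ b → s b a → a ≤ a' → s b' a')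
    (unit : ∀ a a' : A, a ≤ a' → ∃ b : B, r a b ∧ s b a')
    (counit : ∀ (b : B) (a : A) (b' : B), s b a → r a b' → b ≤ b') :
    ∃! f : A →o B, (∀ a b, r a b ↔ f a ≤ b) ∧ (∀ b a, s b a ↔ b ≤ f a) := by
  have h := fun a : A => Classical.choose_spec (unit a a le_rfl)
  set f0 : A → B := fun a => Classical.choose (unit a a le_rfl) with hf0
  have hrf : ∀ a, r a (f0 a) := fun a => (h a).1
  have hsf : ∀ a, s (f0 a) a := fun a => (h a).2
  have mono : Monotone f0 := by
    intro a a' haa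
    exact counit _ _ _ (hsf a) (hr a a' (f0 a') (f0 a') haa (hrf a') le_rfl)
  refine ⟨⟨f0, mono⟩, ⟨?_, ?_⟩, ?_⟩
  · intro a b
    exact ⟨fun h' => counit _ _ _ (hsf a) h', fun h' => hr a a (f0 a) b le_rfl (hrf a) h'⟩
  · intro b a
    exact ⟨fun h' => counit _ _ _ h' (hrf a), fun h' => hs b (f0 a) a a h' (hsf a) le_rfl⟩
  · intro g ⟨hg1, hg2⟩
    ext a
    have h1 : f0 a ≤ g a := counit _ _ _ (hsf a) ((hg1 a (g a)).2 le_rfl)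
    have h2 : g a ≤ f0 a := counit _ _ _ ((hg2 (g a) a).2 le_rfl) (hrf a)
    exact le_antisymm h2 h1
end

section
/- In the category of posets with monotone maps, the epimorphisms, the P-epis, and the surjections coincide. In particular: a monotone map e : A → B is surjective if and only if for all monotone f, g : B → C, f ∘ e ≤ g ∘ e (pointwise) implies f ≤ g (pointwise). -/
theorem pos_epi_Pepi_surjective_coincide {A B : Type} [PartialOrder A] [PartialOrder B]
    (e : A →o B) :
    (Function.Surjective e ↔
      (∀ (C : Type) [PartialOrder C] (f g : B →o C),
        (∀ a, f (e a) ≤ g (e a)) → ∀ b, f b ≤ g b)) ∧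
    (Function.Surjective e ↔
      (∀ (C : Type) [PartialOrder C] (f g : B →o C),
        (∀ a, f (e a) = g (e a)) → f = g)) := by
  have fwd : Function.Surjective e →
      (∀ (C : Type) [PartialOrder C] (f g : B →o C),
        (∀ a, f (e a) ≤ g (e a)) → ∀ b, f b ≤ g b) := by
    intro hs C _ f g h b
    obtain ⟨a, rfl⟩ := hs b
    exact h a
  constructor
  · constructor
    · exact fwd
    · intro h
      by_contra hns
      rw [Function.Surjective] at hns
      push_neg at hns
      obtain ⟨b₀, hb₀⟩ := hns
      set f : B →o Prop := ⟨fun b => b₀ ≤ b, fun x y hxy h => le_trans h hxy⟩ with hf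
      set g : B →o Prop := ⟨fun b => b₀ < b, fun x y hxy h => lt_of_lt_of_le h hxy⟩ with hg
      have hle : ∀ a, f (e a) ≤ g (e a) := by
        intro a h
        exact lt_of_le_of_ne h (fun heq => hb₀ a heq.symm)
      have := h Prop f g hle b₀ (le_refl b₀)
      exact lt_irrefl b₀ this
  · constructor
    · intro hs C _ f g h
      ext b
      obtain ⟨a, rfl⟩ := hs b
      exact h a
    · intro h
      by_contra hns
      rw [Function.Surjective] at hns
      push_neg at hns
      obtain ⟨b₀, hb₀⟩ := hns
      set f : B →o Prop := ⟨fun b => b₀ ≤ b, fun x y hxy h => le_trans h hxy⟩ with hf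
      set g : B →o Prop := ⟨fun b => b₀ < b, fun x y hxy h => lt_of_lt_of_le h hxy⟩ with hg
      have heq : ∀ a, f (e a) = g (e a) := by
        intro a
        apply propext
        constructor
        · intro hle; exact lt_of_le_of_ne hle (fun heqq => hb₀ a heqq.symm)
        · exact le_of_lt
      have := h Prop f g heq
      have h2 : f b₀ = g b₀ := by rw [this]
      simp only [hf, hg, OrderHom.coe_mk] at h2
      exact lt_irrefl b₀ (h2.mp (le_refl b₀))
end

section
/- The contravariant functor 2^- : Pos → Pos preserves exact squares: if (p : W → A, q : W → B, j : A → C, k : B → C) is an exact square of monotone maps between posets (j∘p ≤ k∘q and ∀ a b, j(a) ≤ k(b) → ∃ w, a ≤ p(w) ∧ q(w) ≤ b), then the square of upper-set maps (2^j : 2^C → 2^A, 2^k : 2^C → 2^B, 2^p : 2^A → 2^W, 2^q : 2^B → 2^W) is exact: for all upper sets a of A, b of B with a∘p ≤ b∘q pointwise, there exists an upper set c of C with a ≤ c∘j and c∘k ≤ b. -/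
/-- `2^-` preserves exact squares, with upper sets given by monotone maps to `Prop`. -/
theorem upperSetFunctor_preserves_exact_squares {W A B C : Type*}
    [PartialOrder W] [PartialOrder A] [PartialOrder B] [PartialOrder C]
    (p : W →o A) (q : W →o B) (j : A →o C) (k : B →o C)
    (hineq : ∀ w, j (p w) ≤ k (q w))
    (hexact : ∀ (a : A) (b : B), j a ≤ k b → ∃ w, a ≤ p w ∧ q w ≤ b) :
    ∀ (a : A →o Prop) (b : B →o Prop),
      (∀ w, a (p w) → b (q w)) →
      ∃ c : C →o Prop, (∀ x : A, a x → c (j x)) ∧ (∀ y : B, c (k y) → b y) := by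
  intro a b hab
  refine ⟨⟨fun z => ∃ x, a x ∧ j x ≤ z, ?_⟩, ?_, ?_⟩
  · intro z z' hz ⟨x, hax, hjx⟩
    exact ⟨x, hax, hjx.trans hz⟩
  · exact fun x hx => ⟨x, hx, le_refl _⟩
  · rintro y ⟨x, hax, hjx⟩
    obtain ⟨w, hxp, hqy⟩ := hexact x y hjx
    exact b.monotone hqy (hab w (a.monotone hxp hax))
end

section
/- The extension 2̄ of the upper-set functor to weakening relations is functorial: for weakening relations r : X ⇸ Y and s : Y ⇸ Z between posets, with 2̄(r) = {(A,B) | r[A] ⊆ B} on upper sets, one has 2̄(s · r) = 2̄(s) · 2̄(r), where (s·r)(x,z) ↔ ∃ y, r(x,y) ∧ s(y,z), and composition on the dual side is (2̄(s)·2̄(r))(A,C) ↔ ∃ B upper set of Y, r[A] ⊆ B ∧ s[B] ⊆ C. Also 2̄ maps the identity relation ≤_X to the identity relation (inclusion) on upper sets of X. -/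
def relImage {X Y : Type*} (r : X → Y → Prop) (A : Set X) : Set Y :=
  {y | ∃ x ∈ A, r x y}

theorem dual_extension_functorial {X Y Z : Type*}
    [PartialOrder X] [PartialOrder Y] [PartialOrder Z]
    (r : X → Y → Prop) (s : Y → Z → Prop)
    (hr : ∀ x' x y y', x' ≤ x → r x y → y ≤ y' → r x' y')
    (hs : ∀ y' y z z', y' ≤ y → s y z → z ≤ z' → s y' z') :
    (∀ (A : Set X) (C : Set Z), IsUpperSet A → IsUpperSet C →
      (relImage (fun x z => ∃ y, r x y ∧ s y z) A ⊆ C ↔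
        ∃ B : Set Y, IsUpperSet B ∧ relImage r A ⊆ B ∧ relImage s B ⊆ C)) ∧
    (∀ A B : Set X, IsUpperSet A → IsUpperSet B →
      (relImage (fun x x' : X => x ≤ x') A ⊆ B ↔ A ⊆ B)) := by
  constructor
  · intro A C _ _
    constructor
    · intro h
      refine ⟨relImage r A, ?_, subset_rfl, ?_⟩
      · intro y y' hyy' ⟨x, hx, hxy⟩
        exact ⟨x, hx, hr x x y y' le_rfl hxy hyy'⟩
      · rintro z ⟨y, ⟨x, hx, hxy⟩, hyz⟩
        exact h ⟨x, hx, y, hxy, hyz⟩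
    · rintro ⟨B, _, hAB, hBC⟩ z ⟨x, hx, y, hxy, hyz⟩
      exact hBC ⟨y, hAB ⟨x, hx, hxy⟩, hyz⟩
  · intro A B hA _
    constructor
    · intro h x hx
      exact h ⟨x, hx, le_rfl⟩
    · rintro h x' ⟨x, hx, hxx'⟩
      exact h (hA hxx' hx)
end

section
/- In Pos, the cocomma of a span (p : W → A, q : W → B) of monotone maps can be realized on the disjoint union A ⊕ B: define on A ⊕ B the relation generated by the orders of A and B together with {(p(w), q(w)) | w ∈ W} (left elements below right elements), take its reflexive-transitive closure, and quotient by the induced equivalence; this yields a poset C with maps j : A → C, k : B → C satisfying j∘p ≤ k∘q, which is universal: for any poset D and monotone f : A → D, g : B → D with f∘p ≤ g∘q there is a unique monotone h : C → D with h∘j = f and h∘k = g. -/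
/-- The collage preorder on `A ⊕ B` generated by the orders of `A`, `B` and the span
`(p, q)`: left elements sit below right elements via the span. -/
def cospanRel {W A B : Type} [PartialOrder W] [PartialOrder A] [PartialOrder B]
    (p : W →o A) (q : W →o B) : A ⊕ B → A ⊕ B → Prop
  | Sum.inl a, Sum.inl a' => a ≤ a'
  | Sum.inr b, Sum.inr b' => b ≤ b'
  | Sum.inl a, Sum.inr b => ∃ w, a ≤ p w ∧ q w ≤ b
  | Sum.inr _, Sum.inl _ => False

/-- Wrapper type for `A ⊕ B` carrying the collage order, avoiding the ambient `Sum` order. -/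
structure Collage (A B : Type) where
  toSum : A ⊕ B

namespace CocommaAux

theorem rel_refl {W A B : Type} [PartialOrder W] [PartialOrder A] [PartialOrder B]
    (p : W →o A) (q : W →o B) (x : A ⊕ B) : cospanRel p q x x := by
  cases x <;> simp [cospanRel]

theorem rel_trans {W A B : Type} [PartialOrder W] [PartialOrder A] [PartialOrder B]
    (p : W →o A) (q : W →o B) (x y z : A ⊕ B)
    (hxy : cospanRel p q x y) (hyz : cospanRel p q y z) : cospanRel p q x z := by
  cases x <;> cases y <;> cases z <;> simp_all [cospanRel]
  · exact le_trans hxy hyz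
  · obtain ⟨w, hw1, hw2⟩ := hyz
    exact ⟨w, le_trans hxy hw1, hw2⟩
  · obtain ⟨w, hw1, hw2⟩ := hxy
    exact ⟨w, hw1, le_trans hw2 hyz⟩
  · exact le_trans hxy hyz

theorem rel_antisymm {W A B : Type} [PartialOrder W] [PartialOrder A] [PartialOrder B]
    (p : W →o A) (q : W →o B) (x y : A ⊕ B)
    (hxy : cospanRel p q x y) (hyx : cospanRel p q y x) : x = y := by
  cases x <;> cases y <;> simp_all [cospanRel]
  · exact le_antisymm hxy hyx
  · exact le_antisymm hxy hyx

end CocommaAux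

/-- The collage partial order on the wrapper. -/
def collagePO {W A B : Type} [PartialOrder W] [PartialOrder A] [PartialOrder B]
    (p : W →o A) (q : W →o B) : PartialOrder (Collage A B) where
  le x y := cospanRel p q x.toSum y.toSum
  lt x y := cospanRel p q x.toSum y.toSum ∧ ¬ cospanRel p q y.toSum x.toSum
  lt_iff_le_not_ge _ _ := Iff.rfl
  le_refl x := CocommaAux.rel_refl p q x.toSum
  le_trans x y z := CocommaAux.rel_trans p q x.toSum y.toSum z.toSum
  le_antisymm x y hxy hyx := by
    cases x; cases y
    exact congrArg Collage.mk (CocommaAux.rel_antisymm p q _ _ hxy hyx)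

theorem cocomma_in_Pos {W A B : Type} [PartialOrder W] [PartialOrder A] [PartialOrder B]
    (p : W →o A) (q : W →o B) :
    ∃ (C : Type) (_ : PartialOrder C) (j : A →o C) (k : B →o C),
      (∀ x y : A ⊕ B, cospanRel p q x y ↔ Sum.elim j k x ≤ Sum.elim j k y) ∧
      Function.Surjective (Sum.elim j k : A ⊕ B → C) ∧
      (∀ w, j (p w) ≤ k (q w)) ∧
      ∀ (D : Type) (_ : PartialOrder D) (f : A →o D) (g : B →o D),
        (∀ w, f (p w) ≤ g (q w)) →
        ∃! h : C →o D, (∀ a, h (j a) = f a) ∧ (∀ b, h (k b) = g b) := by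
  letI : PartialOrder (Collage A B) := collagePO p q
  refine ⟨Collage A B, collagePO p q,
    ⟨fun a => ⟨Sum.inl a⟩, fun a a' h => h⟩, ⟨fun b => ⟨Sum.inr b⟩, fun b b' h => h⟩,
    ?_, ?_, ?_, ?_⟩
  · intro x y
    cases x <;> cases y <;> exact Iff.rfl
  · intro x
    obtain ⟨x⟩ := x
    cases x with
    | inl a => exact ⟨Sum.inl a, rfl⟩
    | inr b => exact ⟨Sum.inr b, rfl⟩
  · intro w
    exact ⟨w, le_refl _, le_refl _⟩
  · intro D _ f g hfg
    refine ⟨⟨fun c => Sum.elim f g c.toSum, ?_⟩, ⟨fun a => rfl, fun b => rfl⟩, ?_⟩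
    · rintro ⟨x⟩ ⟨y⟩ hxy
      cases x <;> cases y
      · exact f.monotone hxy
      · obtain ⟨w, hw1, hw2⟩ := hxy
        exact le_trans (f.monotone hw1) (le_trans (hfg w) (g.monotone hw2))
      · exact absurd hxy id
      · exact g.monotone hxy
    · rintro h ⟨ha, hb⟩
      ext ⟨x⟩
      cases x with
      | inl a => exact ha a
      | inr b => exact hb b
end
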